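/- arXiv:2409.08758 — 6 statements merged into one kernel-verified Lean document; each statement's English description precedes it below -/
import Mathlib

section
/- Let Λ be an artin algebra and let f : X → Y be an irreducible morphism in the category proj Λ of finitely generated projective Λ-modules (i.e., f is not a split monomorphism nor a split epimorphism, and whenever f = g ∘ h with h : X → Z and g : Z → Y in proj Λ, either h is a split monomorphism or g is a split epimorphism). Then the cokernel of f, computed in mod Λ, is not a projective Λ-module (in particular it is nonzero). -/
universe u

/-- `M` is a finitely generated projective `Λ`-module. -/
def IsFGProj (Λ : Type u) [Ring Λ] (M : Type u) [AddCommGroup M] [Module Λ M] : Prop :=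
  Module.Finite Λ M ∧ Module.Projective Λ M

/-- `f` is a split monomorphism of `Λ`-modules. -/
def IsSplitMono (Λ : Type u) [Ring Λ] {M N : Type u} [AddCommGroup M] [Module Λ M]
    [AddCommGroup N] [Module Λ N] (f : M →ₗ[Λ] N) : Prop :=
  ∃ r : N →ₗ[Λ] M, r.comp f = LinearMap.id

/-- `f` is a split epimorphism of `Λ`-modules. -/
def IsSplitEpi (Λ : Type u) [Ring Λ] {M N : Type u} [AddCommGroup M] [Module Λ M]
    [AddCommGroup N] [Module Λ N] (f : M →ₗ[Λ] N) : Prop :=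
  ∃ s : N →ₗ[Λ] M, f.comp s = LinearMap.id

/-- `f` is an irreducible morphism in the category `proj Λ` of finitely generated
projective `Λ`-modules: it is neither a split mono nor a split epi, and in every
factorization `f = g ∘ h` through an object of `proj Λ`, either `h` is a split mono
or `g` is a split epi. -/
def IrredProj (Λ : Type u) [Ring Λ] {M N : Type u} [AddCommGroup M] [Module Λ M]
    [AddCommGroup N] [Module Λ N] (f : M →ₗ[Λ] N) : Prop :=
  ¬ IsSplitMono Λ f ∧ ¬ IsSplitEpi Λ f ∧
  ∀ (Z : Type u) [AddCommGroup Z] [Module Λ Z], IsFGProj Λ Z →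
    ∀ (h : M →ₗ[Λ] Z) (g : Z →ₗ[Λ] N), f = g.comp h → IsSplitMono Λ h ∨ IsSplitEpi Λ g

/-- For an artin algebra `Λ` and an irreducible morphism `f : X → Y`
in `proj Λ`, the cokernel of `f` (computed in `mod Λ`) is not projective. -/
theorem cokernel_of_irreducible_in_proj_not_projective
    (R Λ : Type u) [CommRing R] [IsArtinianRing R] [Ring Λ] [Algebra R Λ]
    [Module.Finite R Λ]
    (X Y : Type u) [AddCommGroup X] [Module Λ X] [AddCommGroup Y] [Module Λ Y]
    (hX : IsFGProj Λ X) (hY : IsFGProj Λ Y)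
    (f : X →ₗ[Λ] Y) (hf : IrredProj Λ f) :
    ¬ Module.Projective Λ (Y ⧸ LinearMap.range f) := by
  intro hP
  obtain ⟨hm, he, hfac⟩ := hf
  haveI := hX.1
  haveI := hY.2
  set K := LinearMap.range f with hK
  obtain ⟨s, hs⟩ := Module.projective_lifting_property K.mkQ LinearMap.id
    (Submodule.mkQ_surjective _)
  have hs' : ∀ q, K.mkQ (s q) = q := fun q => congrArg (fun g => g q) hs
  have hmem : ∀ y : Y, y - s (K.mkQ y) ∈ K := by
    intro y
    rw [← Submodule.Quotient.mk_eq_zero, ← Submodule.mkQ_apply, map_sub, hs', sub_self]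
  let r : Y →ₗ[Λ] K := LinearMap.codRestrict K
    (LinearMap.id - s.comp K.mkQ) (by intro y; simpa using hmem y)
  have hr : r.comp K.subtype = LinearMap.id := by
    ext ⟨x, hx⟩
    have hx0 : (Submodule.Quotient.mk x : Y ⧸ K) = 0 :=
      (Submodule.Quotient.mk_eq_zero K).2 hx
    simp [r, LinearMap.codRestrict, hx0]
  -- range f is FG projective
  haveI : Module.Finite Λ K := Module.Finite.range f
  haveI hKproj : Module.Projective Λ K := Module.Projective.of_split K.subtype r hr
  have hfac' : f = K.subtype.comp f.rangeRestrict := by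
    ext x; rfl
  rcases hfac K ⟨inferInstance, hKproj⟩ f.rangeRestrict K.subtype hfac' with h1 | h2
  · -- f.rangeRestrict split mono ⇒ f split mono
    obtain ⟨rh, hrh⟩ := h1
    exact hm ⟨rh.comp r, by
      rw [hfac']
      calc (rh.comp r).comp (K.subtype.comp f.rangeRestrict)
          = rh.comp ((r.comp K.subtype).comp f.rangeRestrict) := by
            simp [LinearMap.comp_assoc]
        _ = LinearMap.id := by rw [hr]; simpa using hrh⟩
  · -- K.subtype split epi ⇒ range f = ⊤ ⇒ f surjective ⇒ f split epi (Y projective)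
    obtain ⟨s2, hs2⟩ := h2
    have hsurj : Function.Surjective f := by
      intro y
      have heq : K.subtype (s2 y) = y := congrArg (fun g => g y) hs2
      obtain ⟨x, hx⟩ := (s2 y).2
      exact ⟨x, by rw [← heq]; exact hx⟩
    obtain ⟨t, ht⟩ := Module.projective_lifting_property f LinearMap.id hsurj
    exact he ⟨t, ht⟩
end

section
/- Let H be a hereditary artin algebra and f : X → Y an irreducible morphism in proj H. Then there is no nonzero morphism g : Y → P with P a finitely generated projective H-module such that g ∘ f = 0. -/
universe u

/-- `Λ` is (left) hereditary: every submodule of a projective module is projective. -/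
def IsHereditaryRing (Λ : Type u) [Ring Λ] : Prop :=
  ∀ (M : Type u) [AddCommGroup M] [Module Λ M], Module.Projective Λ M →
    ∀ N : Submodule Λ M, Module.Projective Λ N

/-- For a hereditary artin algebra `H` and an irreducible morphism
`f : X → Y` in `proj H`, there is no nonzero morphism `g : Y → P` into a finitely
generated projective module `P` with `g ∘ f = 0`. -/
theorem no_nonzero_map_to_projective_killing_irreducible
    (R H : Type u) [CommRing R] [IsArtinianRing R] [Ring H] [Algebra R H]
    [Module.Finite R H] (hH : IsHereditaryRing H)
    (X Y : Type u) [AddCommGroup X] [Module H X] [AddCommGroup Y] [Module H Y]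
    (hX : IsFGProj H X) (hY : IsFGProj H Y)
    (f : X →ₗ[H] Y) (hf : IrredProj H f) :
    ∀ (P : Type u) [AddCommGroup P] [Module H P], IsFGProj H P →
      ∀ g : Y →ₗ[H] P, g.comp f = 0 → g = 0 := by
  intro P _ _ hP g hgf
  have hker_proj : Module.Projective H ↥(LinearMap.ker g) := hH Y hY.2 _
  have hrange_proj : Module.Projective H ↥(LinearMap.range g) := hH P hP.2 _
  obtain ⟨s, hs⟩ := Module.projective_lifting_property g.rangeRestrict LinearMap.id
      g.surjective_rangeRestrict
  have hs' : ∀ z : ↥(LinearMap.range g), g.rangeRestrict (s z) = z := by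
    intro z
    exact congrFun (congrArg DFunLike.coe hs) z
  have hgs : ∀ y : Y, g (s (g.rangeRestrict y)) = g y := by
    intro y
    have h2 : g.rangeRestrict (s (g.rangeRestrict y)) = g.rangeRestrict y := hs' _
    calc g (s (g.rangeRestrict y)) = ((g.rangeRestrict (s (g.rangeRestrict y))) : P) := rfl
      _ = ((g.rangeRestrict y) : P) := by rw [h2]
      _ = g y := rfl
  have hmem : ∀ y : Y, ((LinearMap.id : Y →ₗ[H] Y) - s.comp g.rangeRestrict) y ∈ LinearMap.ker g := by
    intro y
    simp only [LinearMap.mem_ker, LinearMap.sub_apply, LinearMap.id_apply, LinearMap.comp_apply,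
      map_sub, hgs, sub_self]
  set π : Y →ₗ[H] ↥(LinearMap.ker g) :=
    LinearMap.codRestrict _ ((LinearMap.id : Y →ₗ[H] Y) - s.comp g.rangeRestrict) hmem with hπ
  have hπι : ∀ k : ↥(LinearMap.ker g), π (k : Y) = k := by
    intro k
    apply Subtype.ext
    have hk0 : g.rangeRestrict (k : Y) = 0 := by
      apply Subtype.ext
      exact k.2
    simp only [hπ, LinearMap.codRestrict, LinearMap.coe_mk, AddHom.coe_mk, LinearMap.sub_apply,
      LinearMap.id_apply, LinearMap.comp_apply, hk0, sub_eq_self]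
    have h3 : s (g.rangeRestrict (k : Y)) = 0 := by rw [hk0]; exact map_zero s
    exact h3
  have hfmem : ∀ x : X, f x ∈ LinearMap.ker g := by
    intro x
    have := congrFun (congrArg DFunLike.coe hgf) x
    simpa [LinearMap.mem_ker] using this
  set f' : X →ₗ[H] ↥(LinearMap.ker g) := LinearMap.codRestrict _ f hfmem with hf'def
  have hfact : f = (LinearMap.ker g).subtype.comp f' := by
    ext x; rfl
  haveI : Module.Finite H Y := hY.1
  have hfin : Module.Finite H ↥(LinearMap.ker g) :=
    Module.Finite.of_surjective π (fun k => ⟨(k : Y), hπι k⟩)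
  rcases hf.2.2 _ ⟨hfin, hker_proj⟩ f' (LinearMap.ker g).subtype hfact with ⟨r, hr⟩ | ⟨t, ht⟩
  · exfalso
    apply hf.1
    refine ⟨r.comp π, ?_⟩
    ext x
    have h1 : π (f x) = f' x := hπι (f' x)
    have h2 : r (f' x) = x := congrFun (congrArg DFunLike.coe hr) x
    simp [LinearMap.comp_apply, h1, h2]
  · ext y
    have h1 : ((t y : ↥(LinearMap.ker g)) : Y) = y := congrFun (congrArg DFunLike.coe ht) y
    have h2 : g (((t y : ↥(LinearMap.ker g)) : Y)) = 0 := (t y).2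
    rw [h1] at h2
    simpa using h2
end

section
/- Let Λ be an artin algebra and f : X → Y an irreducible morphism in C_n(proj Λ). If f is not an epimorphism and the image Im f^i is projective for every 1 ≤ i ≤ n, then f is a monomorphism. -/
universe u

/-! ### The category `C_n(proj Λ)` of complexes of projectives concentrated in degrees `1,…,n` -/

/-- A complex `X^1 → X^2 → ⋯ → X^n` of `Λ`-modules concentrated in degrees `1,…,n`. -/
structure Cplx (Λ : Type u) [Ring Λ] (n : ℕ) : Type (u + 1) where
  X : ℕ → Type u
  [acg : ∀ i, AddCommGroup (X i)]
  [mod : ∀ i, Module Λ (X i)]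
  d : ∀ i, X i →ₗ[Λ] X (i + 1)
  dd : ∀ i, (d (i + 1)).comp (d i) = 0
  zero_out : ∀ i, i = 0 ∨ n < i → Subsingleton (X i)

attribute [instance] Cplx.acg Cplx.mod

variable {Λ : Type u} [Ring Λ] {n : ℕ}

/-- A morphism of complexes. -/
@[ext]
structure CplxHom (A B : Cplx Λ n) where
  f : ∀ i, A.X i →ₗ[Λ] B.X i
  comm : ∀ i, (f (i + 1)).comp (A.d i) = (B.d i).comp (f i)

namespace CplxHom

variable {A B C : Cplx Λ n}

/-- Composition of morphisms of complexes. -/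
def comp (g : CplxHom B C) (h : CplxHom A B) : CplxHom A C where
  f i := (g.f i).comp (h.f i)
  comm i := by
    ext x
    have h1 := LinearMap.congr_fun (h.comm i) x
    have h2 := LinearMap.congr_fun (g.comm i) (h.f i x)
    simp only [LinearMap.comp_apply] at *
    rw [h1, h2]

/-- The identity morphism of a complex. -/
def id (A : Cplx Λ n) : CplxHom A A where
  f _ := LinearMap.id
  comm i := by simp

instance : Zero (CplxHom A B) :=
  ⟨{ f := fun _ => 0
     comm := fun i => by simp }⟩

instance : Add (CplxHom A B) :=
  ⟨fun φ ψ =>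
    { f := fun i => φ.f i + ψ.f i
      comm := fun i => by
        simp [LinearMap.add_comp, LinearMap.comp_add, φ.comm i, ψ.comm i] }⟩

instance : Neg (CplxHom A B) :=
  ⟨fun φ =>
    { f := fun i => -φ.f i
      comm := fun i => by
        simp [LinearMap.neg_comp, LinearMap.comp_neg, φ.comm i] }⟩

instance : Sub (CplxHom A B) :=
  ⟨fun φ ψ =>
    { f := fun i => φ.f i - ψ.f i
      comm := fun i => by
        simp [LinearMap.sub_comp, LinearMap.comp_sub, φ.comm i, ψ.comm i] }⟩

end CplxHom

/-- A complex belongs to `C_n(proj Λ)`: all terms are finitely generated projective. -/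
def IsProjCplx (A : Cplx Λ n) : Prop :=
  ∀ i, Module.Finite Λ (A.X i) ∧ Module.Projective Λ (A.X i)

/-- A split monomorphism in `C_n(proj Λ)`. -/
def CSplitMono {A B : Cplx Λ n} (φ : CplxHom A B) : Prop :=
  ∃ ψ : CplxHom B A, ψ.comp φ = CplxHom.id A

/-- A split epimorphism in `C_n(proj Λ)`. -/
def CSplitEpi {A B : Cplx Λ n} (φ : CplxHom A B) : Prop :=
  ∃ ψ : CplxHom B A, φ.comp ψ = CplxHom.id B

/-- An isomorphism of complexes. -/
def CIsIso {A B : Cplx Λ n} (φ : CplxHom A B) : Prop :=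
  ∃ ψ : CplxHom B A, ψ.comp φ = CplxHom.id A ∧ φ.comp ψ = CplxHom.id B

/-- An irreducible morphism in `C_n(proj Λ)`: neither a split mono nor a split epi, and
in any factorization through an object of `C_n(proj Λ)` one of the factors splits. -/
def CIrred {A B : Cplx Λ n} (φ : CplxHom A B) : Prop :=
  ¬ CSplitMono φ ∧ ¬ CSplitEpi φ ∧
  ∀ (Z : Cplx Λ n), IsProjCplx Z →
    ∀ (h : CplxHom A Z) (g : CplxHom Z B), φ = g.comp h → CSplitMono h ∨ CSplitEpi g

/-- An indecomposable complex: nonzero, and its only idempotent endomorphisms are `0` and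
the identity. -/
def CIndec (A : Cplx Λ n) : Prop :=
  (∃ i, Nontrivial (A.X i)) ∧
  ∀ e : CplxHom A A, e.comp e = e → e = 0 ∨ e = CplxHom.id A


/-! Factor `f` through its image complex, which lies in `C_n(proj Λ)` since the images are
projective. By irreducibility either `A → Im f` is a split mono, so `f` is injective, or
`Im f → B` is a split epi, so `f` is surjective. -/

section

variable {A B : Cplx Λ n}

theorem CSplitMono.injective {φ : CplxHom A B} (hφ : CSplitMono φ) (i : ℕ) :
    Function.Injective (φ.f i) := by
  obtain ⟨ψ, hψ⟩ := hφ
  have hleft : (ψ.f i).comp (φ.f i) = LinearMap.id := congr_arg (fun e => CplxHom.f e i) hψ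
  exact Function.LeftInverse.injective (g := ψ.f i) (LinearMap.congr_fun hleft)

theorem CSplitEpi.surjective {φ : CplxHom A B} (hφ : CSplitEpi φ) (i : ℕ) :
    Function.Surjective (φ.f i) := by
  obtain ⟨ψ, hψ⟩ := hφ
  have hright : (φ.f i).comp (ψ.f i) = LinearMap.id := congr_arg (fun e => CplxHom.f e i) hψ
  exact fun y => ⟨ψ.f i y, LinearMap.congr_fun hright y⟩

end

namespace CplxHom

variable {A B : Cplx Λ n} (f : CplxHom A B)

theorem d_mem_range (i : ℕ) (y : B.X i) (hy : y ∈ LinearMap.range (f.f i)) :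
    B.d i y ∈ LinearMap.range (f.f (i + 1)) := by
  obtain ⟨x, rfl⟩ := hy
  exact ⟨A.d i x, LinearMap.congr_fun (f.comm i) x⟩

def image : Cplx Λ n where
  X i := LinearMap.range (f.f i)
  d i := (B.d i).restrict (f.d_mem_range i)
  dd i := by
    ext y
    simpa using LinearMap.congr_fun (B.dd i) (y : B.X i)
  zero_out i hi :=
    have := B.zero_out i hi
    Subtype.coe_injective.subsingleton

def factorThruImage : CplxHom A f.image where
  f i := (f.f i).rangeRestrict
  comm i := LinearMap.ext fun x => Subtype.ext (LinearMap.congr_fun (f.comm i) x)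

def imageι : CplxHom f.image B where
  f i := (LinearMap.range (f.f i)).subtype
  comm _ := rfl

theorem imageι_comp_factorThruImage : f.imageι.comp f.factorThruImage = f := rfl

theorem isProjCplx_image (hA : IsProjCplx A)
    (him : ∀ i, Module.Projective Λ (LinearMap.range (f.f i))) : IsProjCplx f.image := fun i =>
  have := (hA i).1
  ⟨Module.Finite.range (f.f i), him i⟩

end CplxHom

theorem irreducible_mono_of_not_epi_of_images_projective_general
    (Λ : Type u) [Ring Λ] (n : ℕ)
    (A B : Cplx Λ n) (hA : IsProjCplx A)
    (f : CplxHom A B) (hf : CIrred f)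
    (hnepi : ¬ ∀ i, Function.Surjective (f.f i))
    (him : ∀ i, Module.Projective Λ (LinearMap.range (f.f i))) :
    ∀ i, Function.Injective (f.f i) := by
  rcases hf.2.2 f.image (f.isProjCplx_image hA him) f.factorThruImage f.imageι
      f.imageι_comp_factorThruImage.symm with hmono | hepi
  · exact fun i => (f.f i).injective_rangeRestrict_iff.mp (hmono.injective i)
  · refine absurd (fun i y => ?_) hnepi
    obtain ⟨⟨_, x, rfl⟩, rfl⟩ := hepi.surjective i y
    exact ⟨x, rfl⟩

/-- An irreducible morphism in `C_n(proj Λ)` which is not an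
epimorphism and whose componentwise images are projective is a monomorphism. -/
theorem irreducible_mono_of_not_epi_of_images_projective
    (R Λ : Type u) [CommRing R] [IsArtinianRing R] [Ring Λ] [Algebra R Λ]
    [Module.Finite R Λ] (n : ℕ) (hn : 2 ≤ n)
    (A B : Cplx Λ n) (hA : IsProjCplx A) (hB : IsProjCplx B)
    (f : CplxHom A B) (hf : CIrred f)
    (hnepi : ¬ ∀ i, Function.Surjective (f.f i))
    (him : ∀ i, Module.Projective Λ (LinearMap.range (f.f i))) :
    ∀ i, Function.Injective (f.f i) :=
  irreducible_mono_of_not_epi_of_images_projective_general Λ n A B hA f hf hnepi him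
end

section
/- Let H be a hereditary artin algebra and f : X → Y an irreducible morphism in C_n(proj H). Then f is either a monomorphism or an epimorphism (componentwise, as a morphism of complexes of modules). -/
universe u

variable {Λ : Type u} [Ring Λ] {n : ℕ}

/-- Over a hereditary artin algebra `H`, every irreducible morphism in
`C_n(proj H)` is a monomorphism or an epimorphism. -/
theorem irreducible_mono_or_epi_of_hereditary
    (R H : Type u) [CommRing R] [IsArtinianRing R] [Ring H] [Algebra R H]
    [Module.Finite R H] (hH : IsHereditaryRing H) (n : ℕ) (hn : 2 ≤ n)
    (A B : Cplx H n) (hA : IsProjCplx A) (hB : IsProjCplx B)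
    (f : CplxHom A B) (hf : CIrred f) :
    (∀ i, Function.Injective (f.f i)) ∨ (∀ i, Function.Surjective (f.f i)) := by
  -- Factor f through its image complex.
  have hmaps : ∀ i, ∀ x ∈ LinearMap.range (f.f i),
      B.d i x ∈ LinearMap.range (f.f (i + 1)) := by
    intro i x hx
    obtain ⟨a, rfl⟩ := hx
    exact ⟨A.d i a, by simpa using LinearMap.congr_fun (f.comm i) a⟩
  let Z : Cplx H n :=
    { X := fun i => ↥(LinearMap.range (f.f i))
      d := fun i => (B.d i).restrict (hmaps i)
      dd := fun i => by
        ext x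
        simp only [LinearMap.comp_apply, LinearMap.restrict_apply, LinearMap.zero_apply]
        have := LinearMap.congr_fun (B.dd i) (x : B.X i)
        simpa using this
      zero_out := fun i hi => by
        haveI := B.zero_out i hi
        exact ⟨fun a b => Subtype.ext (Subsingleton.elim _ _)⟩ }
  have hZ : IsProjCplx Z := by
    intro i
    constructor
    · haveI := (hA i).1
      exact Module.Finite.range (f.f i)
    · exact hH (B.X i) (hB i).2 (LinearMap.range (f.f i))
  let h : CplxHom A Z :=
    { f := fun i => (f.f i).rangeRestrict
      comm := fun i => by
        ext x
        simpa [Z, LinearMap.restrict_apply] using LinearMap.congr_fun (f.comm i) x }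
  let g : CplxHom Z B :=
    { f := fun i => (LinearMap.range (f.f i)).subtype
      comm := fun i => by
        ext x
        simp [Z, LinearMap.restrict_apply] }
  have hfact : f = g.comp h := by
    apply CplxHom.ext
    funext i
    ext x
    rfl
  rcases hf.2.2 Z hZ h g hfact with hsm | hse
  · left
    intro i
    obtain ⟨ψ, hψ⟩ := hsm
    have hcomp : (ψ.f i).comp (h.f i) = LinearMap.id :=
      congrFun (congrArg CplxHom.f hψ) i
    have hinj : Function.Injective (h.f i) :=
      Function.LeftInverse.injective (g := ψ.f i) (fun x => LinearMap.congr_fun hcomp x)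
    have : f.f i = ((LinearMap.range (f.f i)).subtype).comp (h.f i) := rfl
    rw [this]
    exact (Submodule.injective_subtype _).comp hinj
  · right
    intro i
    obtain ⟨ψ, hψ⟩ := hse
    have hcomp : (g.f i).comp (ψ.f i) = LinearMap.id :=
      congrFun (congrArg CplxHom.f hψ) i
    have hsur : Function.Surjective (g.f i) :=
      Function.RightInverse.surjective (g := ψ.f i) (fun x => LinearMap.congr_fun hcomp x)
    have : f.f i = (g.f i).comp (f.f i).rangeRestrict := rfl
    rw [this]
    exact hsur.comp (f.f i).surjective_rangeRestrict
end

section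
/- Let H be a hereditary artin algebra and f : X → Y an irreducible morphism in C_n(proj H) with X or Y indecomposable. If f is of type (ret-irred-sec), then Ker f = 0, i.e., f is a monomorphism. -/
universe u

variable {Λ : Type u} [Ring Λ] {n : ℕ}

/-- Over a hereditary artin algebra `H`, an irreducible morphism in
`C_n(proj H)` with `X` or `Y` indecomposable which is of type `(ret-irred-sec)` has zero
kernel, i.e. is a monomorphism. -/
theorem type_ret_irred_sec_mono
    (R H : Type u) [CommRing R] [IsArtinianRing R] [Ring H] [Algebra R H]
    [Module.Finite R H] (hH : IsHereditaryRing H) (n : ℕ) (hn : 2 ≤ n)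
    (A B : Cplx H n) (hA : IsProjCplx A) (hB : IsProjCplx B)
    (hind : CIndec A ∨ CIndec B)
    (f : CplxHom A B)
    (hf : CIrred f)
    (htype : ∃ i, 1 ≤ i ∧ i ≤ n ∧ IrredProj H (f.f i) ∧
      (∀ j, i < j → IsSplitMono H (f.f j)) ∧ (∀ j, j < i → IsSplitEpi H (f.f j))) :
    ∀ i, Function.Injective (f.f i) := by
  obtain ⟨i, hi1, hin, hirr, _, _⟩ := htype
  -- the kernel submodules form a subcomplex
  have hker : ∀ j, LinearMap.ker (f.f j) ≤
      (LinearMap.ker (f.f (j + 1))).comap (A.d j) := by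
    intro j x hx
    have := LinearMap.congr_fun (f.comm j) x
    simp only [LinearMap.comp_apply] at this
    simp only [Submodule.mem_comap, LinearMap.mem_ker] at *
    rw [this, hx, map_zero]
  -- the quotient complex
  let Q : Cplx H n :=
    { X := fun j => A.X j ⧸ LinearMap.ker (f.f j)
      d := fun j => Submodule.mapQ _ _ (A.d j) (hker j)
      dd := fun j => by
        apply Submodule.linearMap_qext
        rw [LinearMap.comp_assoc, Submodule.mapQ_mkQ, ← LinearMap.comp_assoc,
          Submodule.mapQ_mkQ, LinearMap.comp_assoc, A.dd j]
        ext x; simp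
      zero_out := fun j hj => by
        have := A.zero_out j hj
        exact (Submodule.mkQ_surjective _).subsingleton }
  have hQproj : IsProjCplx Q := by
    intro j
    have e := (f.f j).quotKerEquivRange
    haveI := (hA j).1
    haveI := hH (B.X j) (hB j).2 (LinearMap.range (f.f j))
    exact ⟨Module.Finite.of_surjective (LinearMap.ker (f.f j)).mkQ
        (Submodule.mkQ_surjective _), Module.Projective.of_equiv e.symm⟩
  -- the factorization f = g ∘ h through Q
  let h : CplxHom A Q :=
    { f := fun j => (LinearMap.ker (f.f j)).mkQ
      comm := fun j => (Submodule.mapQ_mkQ _ _ (A.d j) (h := hker j)).symm }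
  let g : CplxHom Q B :=
    { f := fun j => (LinearMap.ker (f.f j)).liftQ (f.f j) le_rfl
      comm := fun j => by
        apply Submodule.linearMap_qext
        rw [LinearMap.comp_assoc, Submodule.mapQ_mkQ, ← LinearMap.comp_assoc,
          Submodule.liftQ_mkQ, LinearMap.comp_assoc, Submodule.liftQ_mkQ, f.comm j] }
  have hfact : f = g.comp h := by
    apply CplxHom.ext
    funext j
    exact (Submodule.liftQ_mkQ _ _ _).symm
  rcases hf.2.2 Q hQproj h g hfact with hmono | hepi
  · -- h split mono ⇒ each mkQ is injective ⇒ all kernels are trivial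
    obtain ⟨ψ, hψ⟩ := hmono
    intro j x y hxy
    have hj := congrFun (congrArg CplxHom.f hψ) j
    have hx := LinearMap.congr_fun hj x
    have hy := LinearMap.congr_fun hj y
    simp only [CplxHom.comp, CplxHom.id, LinearMap.comp_apply, LinearMap.id_apply] at hx hy
    have hh : (h.f j) x = (h.f j) y := by
      show (LinearMap.ker (f.f j)).mkQ x = (LinearMap.ker (f.f j)).mkQ y
      rw [Submodule.mkQ_apply, Submodule.mkQ_apply, Submodule.Quotient.eq]
      simp [LinearMap.mem_ker, map_sub, hxy]
    rw [← hx, ← hy, hh]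
  · -- g split epi ⇒ f.f i is a split epi, contradicting irreducibility
    exfalso
    obtain ⟨s, hs⟩ := hepi
    have hsi : (g.f i).comp (s.f i) = LinearMap.id := by
      have := congrArg CplxHom.f hs
      exact congrFun this i
    -- lift s.f i along the surjection mkQ using projectivity of B.X i
    obtain ⟨t, ht⟩ := Module.projective_lifting_property (R := H)
      (LinearMap.ker (f.f i)).mkQ (s.f i) (Submodule.mkQ_surjective _)
      (h := (hB i).2)
    refine hirr.2.1 ⟨t, ?_⟩
    have : (f.f i) = (g.f i).comp (LinearMap.ker (f.f i)).mkQ :=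
      (Submodule.liftQ_mkQ _ _ _).symm
    rw [this, LinearMap.comp_assoc, ht, hsi]
end

section
/- Let H be a representation-finite hereditary algebra with connected Auslander–Reiten quiver Γ_H with length. Then for any two vertices a, b of the quiver Q_H, every path of irreducible morphisms in Γ_H from the indecomposable projective P_a to the indecomposable injective I_a has the same length as every path from P_b to I_b. -/
universe u

open CategoryTheory

/-- A split monomorphism in `mod Λ`. -/
def MSplitMono {Λ : Type u} [Ring Λ] {M N : ModuleCat.{u} Λ} (f : M ⟶ N) : Prop :=
  ∃ r : N ⟶ M, f ≫ r = 𝟙 M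

/-- A split epimorphism in `mod Λ`. -/
def MSplitEpi {Λ : Type u} [Ring Λ] {M N : ModuleCat.{u} Λ} (f : M ⟶ N) : Prop :=
  ∃ s : N ⟶ M, s ≫ f = 𝟙 N

/-- An irreducible morphism in `mod Λ` (the category of finitely generated modules):
neither a split mono nor a split epi, and in any factorization through a finitely
generated module one of the factors splits. -/
def MIrred {Λ : Type u} [Ring Λ] {M N : ModuleCat.{u} Λ} (f : M ⟶ N) : Prop :=
  ¬ MSplitMono f ∧ ¬ MSplitEpi f ∧
  ∀ (Z : ModuleCat.{u} Λ), Module.Finite Λ Z →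
    ∀ (h : M ⟶ Z) (g : Z ⟶ N), f = h ≫ g → MSplitMono h ∨ MSplitEpi g

/-- An indecomposable module: nonzero, with only trivial idempotent endomorphisms. -/
def MIndec {Λ : Type u} [Ring Λ] (M : ModuleCat.{u} Λ) : Prop :=
  Nontrivial M ∧ ∀ e : M ⟶ M, e ≫ e = e → e = 0 ∨ e = 𝟙 M

/-- `Λ` is representation-finite: there are finitely many indecomposable finitely
generated modules up to isomorphism. -/
def ModRepFinite (Λ : Type u) [Ring Λ] : Prop :=
  ∃ (k : ℕ) (L : Fin k → ModuleCat.{u} Λ),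
    ∀ M : ModuleCat.{u} Λ, Module.Finite Λ M → MIndec M → ∃ i, Nonempty (M ≅ L i)

/-- Paths of irreducible morphisms between indecomposable finitely generated modules
(paths in the Auslander–Reiten quiver of `mod Λ`), with their length. -/
inductive MIrrPath (Λ : Type u) [Ring Λ] : ModuleCat.{u} Λ → ModuleCat.{u} Λ → ℕ → Prop
  | nil (M : ModuleCat.{u} Λ) (h1 : Module.Finite Λ M) (h2 : MIndec M) : MIrrPath Λ M M 0
  | cons {M N P : ModuleCat.{u} Λ} {m : ℕ} (f : M ⟶ N)
      (hM1 : Module.Finite Λ M) (hM2 : MIndec M)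
      (hN1 : Module.Finite Λ N) (hN2 : MIndec N)
      (hf : MIrred f) (hp : MIrrPath Λ N P m) : MIrrPath Λ M P (m + 1)

/-- A sink of the quiver `(V, arrow)`: a vertex with no outgoing arrows. -/
def IsSink {V : Type} (arrow : V → V → Prop) (i : V) : Prop := ∀ w, ¬ arrow i w

/-- A source of the quiver `(V, arrow)`: a vertex with no incoming arrows. -/
def IsSource {V : Type} (arrow : V → V → Prop) (j : V) : Prop := ∀ w, ¬ arrow w j



theorem MIrrPath.snoc {Λ : Type u} [Ring Λ] :
    ∀ {M N : ModuleCat.{u} Λ} {m : ℕ}, MIrrPath Λ M N m →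
    ∀ {Z : ModuleCat.{u} Λ} (f : N ⟶ Z), MIrred f → Module.Finite Λ Z → MIndec Z →
      MIrrPath Λ M Z (m + 1)
  | _, _, _, .nil M h1 h2, _, f, hf, hZ1, hZ2 =>
      .cons f h1 h2 hZ1 hZ2 hf (.nil _ hZ1 hZ2)
  | _, _, _, .cons g hM1 hM2 hN1 hN2 hg hp, _, f, hf, hZ1, hZ2 =>
      .cons g hM1 hM2 hN1 hN2 hg (MIrrPath.snoc hp f hf hZ1 hZ2)

/-- Let `H` be a representation-finite hereditary artin algebra whose
Auslander–Reiten quiver is with length (parallel paths of irreducible morphisms have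
equal length). Then for any two vertices `a, b` of `Q_H`, every path of irreducible
morphisms from the indecomposable projective `P a` to the indecomposable injective `I a`
has the same length as every path from `P b` to `I b`. -/
theorem paths_proj_to_inj_same_length
    (R H : Type u) [CommRing R] [IsArtinianRing R] [Ring H] [Algebra R H]
    [Module.Finite R H]
    (hH : IsHereditaryRing H) (hrf : ModRepFinite H)
    (hlength : ∀ (M N : ModuleCat.{u} H) (m m' : ℕ),
      MIrrPath H M N m → MIrrPath H M N m' → m = m')
    (V : Type) [Fintype V] (arrow : V → V → Prop)
    (hconn : ∀ a b : V, Relation.ReflTransGen (fun x y => arrow x y ∨ arrow y x) a b)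
    (P I : V → ModuleCat.{u} H)
    (hPfg : ∀ v, Module.Finite H (P v)) (hPproj : ∀ v, Module.Projective H (P v))
    (hPind : ∀ v, MIndec (P v))
    (hIfg : ∀ v, Module.Finite H (I v)) (hIinj : ∀ v, Module.Injective H (I v))
    (hIind : ∀ v, MIndec (I v))
    (harrP : ∀ i j, arrow i j → ∃ f : P j ⟶ P i, MIrred f)
    (harrI : ∀ i j, arrow i j → ∃ f : I j ⟶ I i, MIrred f)
    (hPI : ∀ a, ∃ m, MIrrPath H (P a) (I a) m) :
    ∀ (a b : V) (m m' : ℕ),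
      MIrrPath H (P a) (I a) m → MIrrPath H (P b) (I b) m' → m = m' := by
  intro a b m m' hpa hpb
  have key : ∀ i j, arrow i j → ∀ mi mj, MIrrPath H (P i) (I i) mi →
      MIrrPath H (P j) (I j) mj → mi = mj := by
    intro i j hij mi mj hi hj
    obtain ⟨f, hf⟩ := harrP i j hij
    obtain ⟨g, hg⟩ := harrI i j hij
    have p1 : MIrrPath H (P j) (I i) (mi + 1) :=
      .cons f (hPfg j) (hPind j) (hPfg i) (hPind i) hf hi
    have p2 : MIrrPath H (P j) (I i) (mj + 1) :=
      MIrrPath.snoc hj g hg (hIfg i) (hIind i)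
    exact Nat.succ_injective (hlength _ _ _ _ p1 p2)
  have key2 : ∀ x y, (arrow x y ∨ arrow y x) → ∀ mx my, MIrrPath H (P x) (I x) mx →
      MIrrPath H (P y) (I y) my → mx = my := by
    rintro x y (h | h) mx my hx hy
    · exact (key x y h mx my hx hy)
    · exact (key y x h my mx hy hx).symm
  have main : ∀ x, Relation.ReflTransGen (fun x y => arrow x y ∨ arrow y x) a x →
      ∀ mx, MIrrPath H (P x) (I x) mx → m = mx := by
    intro x hx
    induction hx with
    | refl => exact fun mx h => hlength _ _ _ _ hpa h
    | tail hac hcx ih =>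
      intro mx h
      obtain ⟨mc, hc⟩ := hPI _
      exact (ih mc hc).trans (key2 _ _ hcx mc mx hc h)
  exact main b (hconn a b) m' hpb
end
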